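/- arXiv:1907.07678 — 2 statements merged into one kernel-verified Lean document; each statement's English description precedes it below -/
import Mathlib

section
/- Let Ω be a 2×2 connection matrix at z=0 of the form Ω = (A₀/z^n + A₁/z^{n-1} + ⋯)dz with n ≥ 2, A₀ = [[a₀,b₀],[0,a₀]], b₀ ≠ 0, and the (2,1)-entry c₁ of A₁ nonzero. After substituting z = ζ² and applying the gauge transformation Y = diag(1, ζ)·Ȳ, the resulting connection matrix equals 2(A₀/ζ^{2n−1} + B/ζ^{2n−2} + ⋯)dζ where A₀ there is the scalar part diag(a₀,a₀) and B = [[0,b₀],[c₁,0]] has distinct nonzero eigenvalues ±√(b₀c₁). -/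
set_option maxHeartbeats 1000000

noncomputable section

/-- Truncation of a formal Laurent series: keep the coefficients of order `< k`. -/
def truncLT (k : ℤ) (f : LaurentSeries ℂ) : LaurentSeries ℂ where
  coeff n := if n < k then f.coeff n else 0
  isPWO_support' := f.isPWO_support'.mono (by
    intro n hn
    simp only [Function.mem_support] at hn ⊢
    by_cases h : n < k
    · simpa [h] using hn
    · simp [h] at hn)

/-- The negative (principal) part of a formal Laurent series at `z = 0`. -/
def negPart (f : LaurentSeries ℂ) : LaurentSeries ℂ := truncLT 0 f

/-- Formal derivative `d/dz` of a formal Laurent series. -/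
def lderiv (f : LaurentSeries ℂ) : LaurentSeries ℂ where
  coeff n := ((n + 1 : ℤ) : ℂ) * f.coeff (n + 1)
  isPWO_support' := by
    have h : (Function.support fun n : ℤ => ((n + 1 : ℤ) : ℂ) * f.coeff (n + 1)) ⊆
        (fun n : ℤ => n - 1) '' (Function.support f.coeff) := by
      intro n hn
      simp only [Function.mem_support] at hn
      exact ⟨n + 1, fun h => hn (by rw [h, mul_zero]), by ring⟩
    exact (f.isPWO_support'.image_of_monotoneOn
      (fun a _ b _ hab => by omega)).mono h

/-- The gauge transformation `Ω ↦ M⁻¹ Ω M + M⁻¹ dM` (1-forms written `f dz`,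
identified with their Laurent-series coefficient `f`). -/
def gaugeT (M Ω : Matrix (Fin 2) (Fin 2) (LaurentSeries ℂ)) :
    Matrix (Fin 2) (Fin 2) (LaurentSeries ℂ) :=
  M⁻¹ * Ω * M + M⁻¹ * (M.map lderiv)

/-- `M` has formal power series entries, i.e. entries in `ℂ[[z]] ⊂ ℂ((z))`. -/
def MatHolo (M : Matrix (Fin 2) (Fin 2) (LaurentSeries ℂ)) : Prop :=
  ∀ i j, ∀ m : ℤ, m < 0 → (M i j).coeff m = 0

/-- Substitution `z = ζ²` on formal Laurent series (`f(z) ↦ f(ζ²)`). -/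
def sqz (f : LaurentSeries ℂ) : LaurentSeries ℂ where
  coeff n := if 2 ∣ n then f.coeff (n / 2) else 0
  isPWO_support' := by
    have h : (Function.support fun n : ℤ => if 2 ∣ n then f.coeff (n / 2) else 0) ⊆
        (fun n : ℤ => 2 * n) '' (Function.support f.coeff) := by
      intro n hn
      simp only [Function.mem_support] at hn
      by_cases h2 : 2 ∣ n
      · exact ⟨n / 2, fun h => hn (by simp [h2, h]), by show 2 * (n / 2) = n; omega⟩
      · simp [h2] at hn
    exact (f.isPWO_support'.image_of_monotoneOn
      (fun a _ b _ hab => by omega)).mono h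

/-- Pullback of the 1-form `f(z)dz` under `z = ζ²`, namely `2ζ·f(ζ²) dζ`. -/
def pullbackSq (f : LaurentSeries ℂ) : LaurentSeries ℂ :=
  2 * HahnSeries.single 1 1 * sqz f

/-!
Pulling back along `z = ζ²` moves the coefficient `A_k` of `Ω` to the odd order `2k + 1` of `ζ`
(with a factor `2` from `dz = 2ζ dζ`). The shearing gauge `diag(1, ζ)` then shifts the `(0,1)`
entries one order down and the `(1,0)` entries one order up, so odd orders stay diagonal while
even orders collect the off-diagonal entries: order `-(2n-2)` carries `2 [[0, b₀], [c₁, 0]]`,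
made of the `(0,1)` entry of `A₀` and the `(1,0)` entry of `A₁`. Because `A₀` is upper triangular,
nothing reaches order `-2n`; the term `M⁻¹ dM = diag(0, 1/ζ)` only matters at order `-1`, which
`n ≥ 2` keeps apart from the two leading orders.
-/

open HahnSeries Matrix

lemma lderiv_single (a : ℤ) (r : ℂ) : lderiv (single a r) = single (a - 1) (a * r) := by
  ext m
  simp only [lderiv, coeff_single]
  by_cases h : m = a - 1
  · subst h; simp
  · rw [if_neg (by omega), if_neg h, mul_zero]

lemma lderiv_zero : lderiv 0 = 0 := by
  ext m; simp [lderiv]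

lemma gaugeT_diagonal_apply (d : Fin 2 → LaurentSeries ℂ) (hd : ∀ i, d i ≠ 0)
    (Ω : Matrix (Fin 2) (Fin 2) (LaurentSeries ℂ)) (i j : Fin 2) :
    gaugeT (diagonal d) Ω i j =
      (d i)⁻¹ * Ω i j * d j + if i = j then (d i)⁻¹ * lderiv (d i) else 0 := by
  have hinv : (diagonal d)⁻¹ = diagonal fun i => (d i)⁻¹ :=
    inv_eq_left_inv (by rw [diagonal_mul_diagonal]; simp [inv_mul_cancel₀ (hd _)])
  rw [gaugeT, hinv, diagonal_map lderiv_zero, diagonal_mul_diagonal, Matrix.add_apply,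
    mul_diagonal, diagonal_mul, diagonal_apply]

lemma coeff_gaugeT_diagonal_single (e : Fin 2 → ℤ) (Ω : Matrix (Fin 2) (Fin 2) (LaurentSeries ℂ))
    (i j : Fin 2) (m : ℤ) :
    (gaugeT (diagonal fun i => single (e i) 1) Ω i j).coeff m =
      (Ω i j).coeff (m + e i - e j) + if i = j ∧ m = -1 then (e i : ℂ) else 0 := by
  rw [gaugeT_diagonal_apply _ (fun i => single_ne_zero one_ne_zero), lderiv_single, inv_single,
    inv_one, coeff_add, coeff_mul_single, coeff_single_mul, one_mul, mul_one,
    show m - e j - -e i = m + e i - e j by ring]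
  congr 1
  by_cases h : i = j
  · rw [if_pos h, single_mul_single, coeff_single, show -e i + (e i - 1) = -1 by ring]
    simp [h]
  · simp [h]

lemma coeff_pullbackSq (f : LaurentSeries ℂ) (m : ℤ) :
    (pullbackSq f).coeff m = 2 * (sqz f).coeff (m - 1) := by
  rw [pullbackSq, mul_assoc, two_mul, coeff_add, coeff_single_mul, one_mul, two_mul]

lemma coeff_pullbackSq_two_mul_add_one (f : LaurentSeries ℂ) (k : ℤ) :
    (pullbackSq f).coeff (2 * k + 1) = 2 * f.coeff k := by
  simp [coeff_pullbackSq, sqz]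

lemma coeff_pullbackSq_two_mul (f : LaurentSeries ℂ) (k : ℤ) :
    (pullbackSq f).coeff (2 * k) = 0 := by
  rw [coeff_pullbackSq]
  change 2 * (if 2 ∣ 2 * k - 1 then _ else 0) = 0
  rw [if_neg (by omega), mul_zero]

def shearPullback (Ω : Matrix (Fin 2) (Fin 2) (LaurentSeries ℂ)) :
    Matrix (Fin 2) (Fin 2) (LaurentSeries ℂ) :=
  gaugeT (diagonal ![1, single 1 1]) (Ω.map pullbackSq)

lemma coeff_shearPullback (Ω : Matrix (Fin 2) (Fin 2) (LaurentSeries ℂ)) (i j : Fin 2) (m : ℤ) :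
    (shearPullback Ω i j).coeff m =
      (pullbackSq (Ω i j)).coeff (m + ![0, 1] i - ![0, 1] j) +
        if i = j ∧ m = -1 then ((![0, 1] i : ℤ) : ℂ) else 0 := by
  have hd : ![1, single 1 1] = fun i : Fin 2 => (single (![0, 1] i) 1 : LaurentSeries ℂ) := by
    funext i; fin_cases i <;> simp
  rw [shearPullback, hd, coeff_gaugeT_diagonal_single, map_apply]

lemma coeff_shearPullback_two_mul_add_one (Ω : Matrix (Fin 2) (Fin 2) (LaurentSeries ℂ)) {k : ℤ}
    (hk : k ≠ -1) :
    (of fun i j => (shearPullback Ω i j).coeff (2 * k + 1)) =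
      (2 : ℂ) • diagonal fun i => (Ω i i).coeff k := by
  have hodd : 2 * k + 1 ≠ -1 := by omega
  ext i j
  fin_cases i <;> fin_cases j <;>
    simp [coeff_shearPullback, hodd] <;>
    simp [coeff_pullbackSq_two_mul_add_one, coeff_pullbackSq_two_mul,
      show 2 * k + 1 + 1 = 2 * (k + 1) by ring]

lemma coeff_shearPullback_two_mul (Ω : Matrix (Fin 2) (Fin 2) (LaurentSeries ℂ)) (k : ℤ) :
    (of fun i j => (shearPullback Ω i j).coeff (2 * k)) =
      (2 : ℂ) • !![0, (Ω 0 1).coeff (k - 1); (Ω 1 0).coeff k, 0] := by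
  have heven : 2 * k ≠ -1 := by omega
  ext i j
  fin_cases i <;> fin_cases j <;>
    simp [coeff_shearPullback, coeff_pullbackSq_two_mul_add_one, coeff_pullbackSq_two_mul, heven,
      show 2 * k - 1 = 2 * (k - 1) + 1 by ring]

lemma coeff_shearPullback_eq_zero_of_lt (Ω : Matrix (Fin 2) (Fin 2) (LaurentSeries ℂ)) {N : ℤ}
    (hN : N < 0) (hpole : ∀ i j, ∀ m < N, (Ω i j).coeff m = 0) (h₁₀ : (Ω 1 0).coeff N = 0)
    (i j : Fin 2) {m : ℤ} (hm : m < 2 * N + 1) : (shearPullback Ω i j).coeff m = 0 := by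
  obtain ⟨k, rfl | rfl⟩ := Int.even_or_odd' m
  · have h₁₀' : (Ω 1 0).coeff k = 0 := by
      rcases (show k < N ∨ k = N by omega) with hk | rfl
      exacts [hpole 1 0 k hk, h₁₀]
    have := congrFun₂ (coeff_shearPullback_two_mul Ω k) i j
    rw [hpole 0 1 (k - 1) (by omega), h₁₀'] at this
    fin_cases i <;> fin_cases j <;> simpa using this
  · have := congrFun₂ (coeff_shearPullback_two_mul_add_one Ω (k := k) (by omega)) i j
    simp only [hpole _ _ k (by omega)] at this
    simpa using this

lemma exists_pm_eigenvalues_antidiag {b c : ℂ} (hb : b ≠ 0) (hc : c ≠ 0) :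
    ∃ s : ℂ, s ≠ 0 ∧ s ^ 2 = b * c ∧
      trace !![0, b; c, 0] = s + (-s) ∧ det !![0, b; c, 0] = s * (-s) := by
  obtain ⟨s, hs⟩ := IsAlgClosed.exists_pow_nat_eq (b * c) two_pos
  refine ⟨s, ?_, hs, ?_, ?_⟩
  · rintro rfl
    exact mul_ne_zero hb hc (by rw [← hs]; ring)
  · simp [trace_fin_two]
  · simp [det_fin_two, ← hs]
    ring

/-- in the ramified case, after the base change `z = ζ²` and the gauge
`Y = diag(1,ζ)Ȳ`, the connection matrix becomes `2(a₀I/ζ^{2n−1} + B/ζ^{2n−2} + ⋯)dζ`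
with `B = [[0,b₀],[c₁,0]]` having distinct nonzero eigenvalues `±√(b₀c₁)`. -/
theorem ramified_base_change
    (n : ℕ) (hn : 2 ≤ n) (Ω : Matrix (Fin 2) (Fin 2) (LaurentSeries ℂ))
    (hpole : ∀ i j, ∀ m : ℤ, m < -(n : ℤ) → (Ω i j).coeff m = 0)
    (a₀ b₀ c₁ : ℂ) (hb₀ : b₀ ≠ 0)
    (hA₀ : (Matrix.of fun i j => (Ω i j).coeff (-(n : ℤ))) = Matrix.of !![a₀, b₀; 0, a₀])
    (hc₁ : (Ω 1 0).coeff (-(n : ℤ) + 1) = c₁) (hc₁ne : c₁ ≠ 0)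
    (M Ωb : Matrix (Fin 2) (Fin 2) (LaurentSeries ℂ))
    (hM : M = Matrix.diagonal ![1, HahnSeries.single 1 1])
    (hΩb : Ωb = gaugeT M (Ω.map pullbackSq)) :
    -- pole order 2n − 1 in ζ
    (∀ i j, ∀ m : ℤ, m < -(2 * n : ℤ) + 1 → (Ωb i j).coeff m = 0) ∧
    -- leading term 2a₀·I at order ζ^{-(2n-1)}
    (Matrix.of fun i j => (Ωb i j).coeff (-(2 * n : ℤ) + 1))
      = (2 * a₀) • (1 : Matrix (Fin 2) (Fin 2) ℂ) ∧
    -- subleading term 2B at order ζ^{-(2n-2)}, B = [[0,b₀],[c₁,0]]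
    (Matrix.of fun i j => (Ωb i j).coeff (-(2 * n : ℤ) + 2))
      = (2 : ℂ) • Matrix.of !![0, b₀; c₁, 0] ∧
    -- B has distinct nonzero eigenvalues ±√(b₀c₁)
    (∃ s : ℂ, s ≠ 0 ∧ s ^ 2 = b₀ * c₁ ∧
      Matrix.trace (Matrix.of !![0, b₀; c₁, 0]) = s + (-s) ∧
      (Matrix.of !![0, b₀; c₁, 0]).det = s * (-s)) := by
  obtain rfl : Ωb = shearPullback Ω := by rw [hΩb, hM, shearPullback]
  have hA : ∀ i j, (Ω i j).coeff (-n) = !![a₀, b₀; 0, a₀] i j := congrFun₂ hA₀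
  refine ⟨fun i j m hm => ?_, ?_, ?_, exists_pm_eigenvalues_antidiag hb₀ hc₁ne⟩
  · exact coeff_shearPullback_eq_zero_of_lt Ω (by omega) hpole (hA 1 0) i j (by omega)
  · rw [show -(2 * n : ℤ) + 1 = 2 * (-n) + 1 by ring,
      coeff_shearPullback_two_mul_add_one Ω (by omega)]
    ext i j
    fin_cases i <;> fin_cases j <;> simp [hA, mul_comm]
  · rw [show -(2 * n : ℤ) + 2 = 2 * (-n + 1) by ring, coeff_shearPullback_two_mul,
      add_sub_cancel_right, hA, hc₁]
    ext i j
    fin_cases i <;> fin_cases j <;> rfl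

end
end

section
/- In the unramified diagonalization of Proposition 2.2, the matrix M = [[1, β/(λ⁻−α)],[γ/(λ⁺−δ), 1]] satisfies M⁻¹ΩM = diag(λ⁺, λ⁻), where λ^± are the two eigenvalue 1-forms of Ω = [[α,β],[γ,δ]] (solutions of det(Ω − λI) = 0) and M is holomorphically invertible at z = 0. -/
/-!
The columns `(1, γ/(λ⁺−δ))` and `(β/(λ⁻−α), 1)` of `M` are eigenvectors of `Ω` for `λ⁺` and `λ⁻`:
this only uses that `λ±` are roots of the characteristic polynomial, so `Ω M = M diag(λ⁺, λ⁻)`.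
Since `θ₀⁺ ≠ θ₀⁻`, both `λ⁻ − α` and `λ⁺ − δ` have exact pole order `n`, while the
off-diagonal entries `β`, `γ` of `Ω` have a pole of order `< n`. Hence the off-diagonal entries
of `M` vanish at `z = 0`, `M` is holomorphic and `det M ≡ 1 mod z`, so `M` is invertible.
-/

set_option maxHeartbeats 1000000

noncomputable section

namespace HahnSeries

variable {Γ R : Type*} [LinearOrder Γ]

theorem coe_le_orderTop_iff [Zero R] {x : HahnSeries Γ R} {i : Γ} :
    (i : WithTop Γ) ≤ x.orderTop ↔ ∀ j < i, x.coeff j = 0 := by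
  simp [le_orderTop_iff_forall]

theorem coe_lt_orderTop_of_coeff_eq_zero [Zero R] {x : HahnSeries Γ R} {i : Γ}
    (h : ∀ j < i, x.coeff j = 0) (hi : x.coeff i = 0) : (i : WithTop Γ) < x.orderTop :=
  (coe_le_orderTop_iff.mpr h).lt_of_ne (orderTop_ne_of_coeff_eq_zero hi).symm

theorem orderTop_sub_eq_of_coeff_ne [AddGroup R] {x y : HahnSeries Γ R} {i : Γ}
    (hx : ∀ j < i, x.coeff j = 0) (hy : ∀ j < i, y.coeff j = 0) (hi : x.coeff i ≠ y.coeff i) :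
    (x - y).orderTop = i :=
  le_antisymm (orderTop_le_of_coeff_ne_zero (by rwa [coeff_sub, sub_ne_zero]))
    (coe_le_orderTop_iff.mpr fun j hj => by rw [coeff_sub, hx j hj, hy j hj, sub_zero])

end HahnSeries

namespace LaurentSeries

open HahnSeries WithTop.LinearOrderedAddCommGroup

theorem coeff_zero_det_fin_two {R : Type*} [CommRing R] {b c : LaurentSeries R}
    (hb : 0 < b.orderTop) (hc : 0 < c.orderTop) : (!![1, b; c, 1]).det.coeff 0 = 1 := by
  have hbc : 0 < (b * c).orderTop :=
    (add_pos_of_pos_of_nonneg hb hc.le).trans_le orderTop_add_le_mul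
  rw [Matrix.det_fin_two_of, one_mul, coeff_sub, coeff_one, if_pos rfl,
    coeff_eq_zero_of_lt_orderTop hbc, sub_zero]

variable {K : Type*} [Field K]

theorem orderTop_inv (x : LaurentSeries K) : x⁻¹.orderTop = -x.orderTop := by
  rcases eq_or_ne x 0 with rfl | hx
  · simp
  obtain ⟨a, ha⟩ := WithTop.ne_top_iff_exists.mp (orderTop_ne_top.mpr hx)
  obtain ⟨b, hb⟩ := WithTop.ne_top_iff_exists.mp (orderTop_ne_top.mpr (inv_ne_zero hx))
  have h := orderTop_mul x x⁻¹
  rw [mul_inv_cancel₀ hx, orderTop_one, ← ha, ← hb] at h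
  rw [← ha, ← hb, ← coe_neg, WithTop.coe_eq_coe]
  norm_cast at h
  omega

theorem orderTop_div_pos {f g : LaurentSeries K} (h : g.orderTop < f.orderTop) :
    0 < (f / g).orderTop := by
  rcases eq_or_ne f 0 with rfl | hf
  · simp
  obtain ⟨a, ha⟩ := WithTop.ne_top_iff_exists.mp (orderTop_ne_top.mpr hf)
  obtain ⟨b, hb⟩ := WithTop.ne_top_iff_exists.mp (h.trans_le le_top).ne
  rw [← ha, ← hb, WithTop.coe_lt_coe] at h
  rw [div_eq_mul_inv, orderTop_mul, orderTop_inv, ← ha, ← hb, ← coe_neg,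
    ← WithTop.coe_add, ← WithTop.coe_zero, WithTop.coe_lt_coe]
  omega

end LaurentSeries

theorem matHolo_iff {M : Matrix (Fin 2) (Fin 2) (LaurentSeries ℂ)} :
    MatHolo M ↔ ∀ i j, 0 ≤ (M i j).orderTop := by
  simp only [MatHolo, ← WithTop.coe_zero, HahnSeries.coe_le_orderTop_iff]

theorem Matrix.fin_two_mul_eigenvectors {K : Type*} [Field K] {α β γ δ lp lm : K}
    (hlp : lp ^ 2 - (α + δ) * lp + (α * δ - β * γ) = 0)
    (hlm : lm ^ 2 - (α + δ) * lm + (α * δ - β * γ) = 0)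
    (hx : lm - α ≠ 0) (hy : lp - δ ≠ 0) :
    !![α, β; γ, δ] * !![1, β / (lm - α); γ / (lp - δ), 1] =
      !![1, β / (lm - α); γ / (lp - δ), 1] * diagonal ![lp, lm] := by
  rw [diagonal_fin_two, mul_fin_two, mul_fin_two]
  ext i j
  fin_cases i <;> fin_cases j <;>
    simp only [of_apply, cons_val', cons_val_zero, cons_val_one, cons_val_fin_one, Fin.zero_eta,
      Fin.mk_one, mul_one, one_mul, mul_zero, zero_add, add_zero] <;>
    field_simp
  · linear_combination -hlp
  · ring
  · ring
  · linear_combination -hlm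

theorem diagonalizing_matrix_general
    (n : ℕ) (α β γ δ lp lm : LaurentSeries ℂ)
    (hα : ∀ m : ℤ, m < -(n : ℤ) → α.coeff m = 0)
    (hβ : ∀ m : ℤ, m < -(n : ℤ) → β.coeff m = 0)
    (hγ : ∀ m : ℤ, m < -(n : ℤ) → γ.coeff m = 0)
    (hδ : ∀ m : ℤ, m < -(n : ℤ) → δ.coeff m = 0)
    (θp θm : ℂ) (hθ : θp ≠ θm)
    (hlead : α.coeff (-(n : ℤ)) = θp ∧ δ.coeff (-(n : ℤ)) = θm ∧
      β.coeff (-(n : ℤ)) = 0 ∧ γ.coeff (-(n : ℤ)) = 0)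
    (hlppole : ∀ m : ℤ, m < -(n : ℤ) → lp.coeff m = 0)
    (hlmpole : ∀ m : ℤ, m < -(n : ℤ) → lm.coeff m = 0)
    (hlplead : lp.coeff (-(n : ℤ)) = θp) (hlmlead : lm.coeff (-(n : ℤ)) = θm)
    (hlp : lp ^ 2 - (α + δ) * lp + (α * δ - β * γ) = 0)
    (hlm : lm ^ 2 - (α + δ) * lm + (α * δ - β * γ) = 0)
    (M : Matrix (Fin 2) (Fin 2) (LaurentSeries ℂ))
    (hM : M = Matrix.of !![1, β / (lm - α); γ / (lp - δ), 1]) :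
    MatHolo M ∧ (M.det).coeff 0 ≠ 0 ∧
      M⁻¹ * Matrix.of !![α, β; γ, δ] * M = Matrix.diagonal ![lp, lm] := by
  obtain ⟨hαl, hδl, hβl, hγl⟩ := hlead
  replace hM : M = !![1, β / (lm - α); γ / (lp - δ), 1] := hM
  have hx : (lm - α).orderTop = -(n : ℤ) :=
    HahnSeries.orderTop_sub_eq_of_coeff_ne hlmpole hα (by rw [hlmlead, hαl]; exact hθ.symm)
  have hy : (lp - δ).orderTop = -(n : ℤ) :=
    HahnSeries.orderTop_sub_eq_of_coeff_ne hlppole hδ (by rw [hlplead, hδl]; exact hθ)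
  have hβx : 0 < (β / (lm - α)).orderTop :=
    LaurentSeries.orderTop_div_pos (hx ▸ HahnSeries.coe_lt_orderTop_of_coeff_eq_zero hβ hβl)
  have hγy : 0 < (γ / (lp - δ)).orderTop :=
    LaurentSeries.orderTop_div_pos (hy ▸ HahnSeries.coe_lt_orderTop_of_coeff_eq_zero hγ hγl)
  have hdet : M.det.coeff 0 = 1 := hM ▸ LaurentSeries.coeff_zero_det_fin_two hβx hγy
  have hΩM : Matrix.of !![α, β; γ, δ] * M = M * Matrix.diagonal ![lp, lm] :=
    hM ▸ Matrix.fin_two_mul_eigenvectors hlp hlm (HahnSeries.orderTop_ne_top.mp (by simp [hx]))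
      (HahnSeries.orderTop_ne_top.mp (by simp [hy]))
  refine ⟨?_, hdet ▸ one_ne_zero, ?_⟩
  · simp [matHolo_iff, hM, Fin.forall_fin_two, hβx.le, hγy.le]
  · have hunit : IsUnit M.det := isUnit_iff_ne_zero.mpr fun h => by simp [h] at hdet
    rw [Matrix.mul_assoc, hΩM, Matrix.nonsing_inv_mul_cancel_left _ _ hunit]

/-- the matrix `M = [[1, β/(λ⁻−α)],[γ/(λ⁺−δ), 1]]` is holomorphic and
holomorphically invertible at `z = 0` and conjugates `Ω = [[α,β],[γ,δ]]` into
`diag(λ⁺, λ⁻)`, where `λ±` are the eigenvalue 1-forms of `Ω`. -/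
theorem diagonalizing_matrix
    (n : ℕ) (hn : 2 ≤ n) (α β γ δ lp lm : LaurentSeries ℂ)
    (hα : ∀ m : ℤ, m < -(n : ℤ) → α.coeff m = 0)
    (hβ : ∀ m : ℤ, m < -(n : ℤ) → β.coeff m = 0)
    (hγ : ∀ m : ℤ, m < -(n : ℤ) → γ.coeff m = 0)
    (hδ : ∀ m : ℤ, m < -(n : ℤ) → δ.coeff m = 0)
    (θp θm : ℂ) (hθ : θp ≠ θm)
    (hlead : α.coeff (-(n : ℤ)) = θp ∧ δ.coeff (-(n : ℤ)) = θm ∧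
      β.coeff (-(n : ℤ)) = 0 ∧ γ.coeff (-(n : ℤ)) = 0)
    (hlppole : ∀ m : ℤ, m < -(n : ℤ) → lp.coeff m = 0)
    (hlmpole : ∀ m : ℤ, m < -(n : ℤ) → lm.coeff m = 0)
    (hlplead : lp.coeff (-(n : ℤ)) = θp) (hlmlead : lm.coeff (-(n : ℤ)) = θm)
    (hlp : lp ^ 2 - (α + δ) * lp + (α * δ - β * γ) = 0)
    (hlm : lm ^ 2 - (α + δ) * lm + (α * δ - β * γ) = 0)
    (M : Matrix (Fin 2) (Fin 2) (LaurentSeries ℂ))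
    (hM : M = Matrix.of !![1, β / (lm - α); γ / (lp - δ), 1]) :
    MatHolo M ∧ (M.det).coeff 0 ≠ 0 ∧
      M⁻¹ * Matrix.of !![α, β; γ, δ] * M = Matrix.diagonal ![lp, lm] :=
  diagonalizing_matrix_general n α β γ δ lp lm hα hβ hγ hδ θp θm hθ hlead hlppole hlmpole hlplead
    hlmlead hlp hlm M hM

end
end
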